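/- Let B be a real symmetric N×N matrix that is conditionally negative semidefinite, i.e. λᵀ B λ ≤ 0 for all λ ∈ R^N with ∑ λ_j = 0. Let C = I - (1/N)𝟙 be the centering matrix (𝟙 the all-ones matrix). Then A := -C B C is positive semidefinite. -/

import Mathlib

/-! Since `C` is symmetric, `xᵀ (-C B C) x = -(C x)ᵀ B (C x)`, and `C x` always has entries summing
to zero, so conditional negative semidefiniteness of `B` makes this nonnegative. -/

open Matrix

namespace Matrix

variable {ι : Type*} [Fintype ι]

def IsCondNegSemidef (B : Matrix ι ι ℝ) : Prop :=
  ∀ lam : ι → ℝ, ∑ j, lam j = 0 → lam ⬝ᵥ (B *ᵥ lam) ≤ 0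

theorem posSemidef_neg_transpose_mul_mul {B : Matrix ι ι ℝ} (hB : B.IsSymm) (C : Matrix ι ι ℝ)
    (hBC : ∀ x, (C *ᵥ x) ⬝ᵥ (B *ᵥ (C *ᵥ x)) ≤ 0) : (-(Cᵀ * B * C)).PosSemidef := by
  refine PosSemidef.of_dotProduct_mulVec_nonneg ?_ fun x => ?_
  · have hsymm : (Cᵀ * B * C)ᵀ = Cᵀ * B * C := by
      rw [transpose_mul, transpose_mul, hB, transpose_transpose, Matrix.mul_assoc]
    exact IsHermitian.neg hsymm
  · have hquad : x ⬝ᵥ ((Cᵀ * B * C) *ᵥ x) = (C *ᵥ x) ⬝ᵥ (B *ᵥ (C *ᵥ x)) := by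
      rw [← mulVec_mulVec, ← mulVec_mulVec, dotProduct_mulVec, vecMul_transpose]
    simpa only [star_trivial, neg_mulVec, dotProduct_neg, hquad, neg_nonneg] using hBC x

variable (ι) [DecidableEq ι]

noncomputable def centeringMatrix : Matrix ι ι ℝ :=
  1 - (Fintype.card ι : ℝ)⁻¹ • of fun _ _ => 1

theorem centeringMatrix_isSymm : (centeringMatrix ι).IsSymm := by
  ext i j
  simp [centeringMatrix, one_apply, eq_comm]

theorem centeringMatrix_mulVec_apply (x : ι → ℝ) (i : ι) :
    (centeringMatrix ι *ᵥ x) i = x i - (Fintype.card ι : ℝ)⁻¹ * ∑ j, x j := by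
  simp [centeringMatrix, mulVec, dotProduct, one_apply, sub_mul, Finset.sum_sub_distrib,
    Finset.mul_sum]

theorem sum_centeringMatrix_mulVec (x : ι → ℝ) : ∑ i, (centeringMatrix ι *ᵥ x) i = 0 := by
  simp only [centeringMatrix_mulVec_apply, Finset.sum_sub_distrib, Finset.sum_const,
    Finset.card_univ, nsmul_eq_mul]
  rcases isEmpty_or_nonempty ι with hι | hι
  · simp
  · field_simp
    ring

variable {ι}

theorem IsCondNegSemidef.posSemidef_neg_centeringMatrix_conj {B : Matrix ι ι ℝ} (hB : B.IsSymm)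
    (hcnd : B.IsCondNegSemidef) :
    (-(centeringMatrix ι * B * centeringMatrix ι)).PosSemidef := by
  have h := posSemidef_neg_transpose_mul_mul hB (centeringMatrix ι) fun x =>
    hcnd _ (sum_centeringMatrix_mulVec ι x)
  rwa [centeringMatrix_isSymm] at h

end Matrix

theorem neg_double_centering_posSemidef_general (N : ℕ)
    (B : Matrix (Fin N) (Fin N) ℝ) (hsymm : B.IsSymm)
    (hcnd : ∀ lam : Fin N → ℝ, ∑ j, lam j = 0 → lam ⬝ᵥ (B *ᵥ lam) ≤ 0) :
    letI C : Matrix (Fin N) (Fin N) ℝ :=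
      1 - (N : ℝ)⁻¹ • Matrix.of (fun _ _ => (1 : ℝ))
    (-(C * B * C)).PosSemidef := by
  simpa [centeringMatrix] using IsCondNegSemidef.posSemidef_neg_centeringMatrix_conj hsymm hcnd

/-- If `B` is a real symmetric `N×N` matrix that is conditionally negative semidefinite
(`λᵀ B λ ≤ 0` whenever `∑ λ j = 0`) and `C = I - (1/N) 𝟙` is the centering matrix, then
`A := -C B C` is positive semidefinite. -/
theorem neg_double_centering_posSemidef (N : ℕ) (hN : 1 ≤ N)
    (B : Matrix (Fin N) (Fin N) ℝ) (hsymm : B.IsSymm)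
    (hcnd : ∀ lam : Fin N → ℝ, ∑ j, lam j = 0 → lam ⬝ᵥ (B *ᵥ lam) ≤ 0) :
    letI C : Matrix (Fin N) (Fin N) ℝ :=
      1 - (N : ℝ)⁻¹ • Matrix.of (fun _ _ => (1 : ℝ))
    (-(C * B * C)).PosSemidef :=
  neg_double_centering_posSemidef_general N B hsymm hcnd
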